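/- Write (q;q)_∞⁹ / (q³;q³)_∞⁹ = Σ_{n=0}^∞ a_n q^n. Then, as formal power series, Σ_{n=0}^∞ a_{3n} q^n = (q;q)_∞³ / (q³;q³)_∞³. -/

import Mathlib

open PowerSeries

/-- Coefficientwise (product) topology on `ℤ⟦X⟧`, so that infinite products of
power series make sense via `tprod`. -/
noncomputable instance : TopologicalSpace (PowerSeries ℤ) :=
  TopologicalSpace.induced (fun (f : PowerSeries ℤ) => fun n => (PowerSeries.coeff n) f) inferInstance

/-- `(q^j; q^M)_∞ = ∏_{n=0}^∞ (1 - q^{j + M n})` as a formal power series over `ℤ`. -/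
noncomputable def qPoch (j M : ℕ) : PowerSeries ℤ :=
  ∏' n : ℕ, (1 - (X : PowerSeries ℤ) ^ (j + M * n))

/-- `(q^k; q^k)_∞ = ∏_{n=1}^∞ (1 - q^{k n})` as a formal power series over `ℤ`. -/
noncomputable def E (k : ℕ) : PowerSeries ℤ :=
  ∏' n : ℕ, (1 - (X : PowerSeries ℤ) ^ (k * (n + 1)))

namespace EMT
open Finset Filter

abbrev P := PowerSeries ℤ

/-- congruence modulo `X^(n+1)` -/
def Cg {R : Type*} [CommRing R] (n : ℕ) (f g : PowerSeries R) : Prop :=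
  ∀ i, i ≤ n → coeff i f = coeff i g

variable {R : Type*} [CommRing R]

lemma Cg.refl (n : ℕ) (f : PowerSeries R) : Cg n f f := fun _ _ => rfl

lemma Cg.symm {n : ℕ} {f g : PowerSeries R} (h : Cg n f g) : Cg n g f :=
  fun i hi => (h i hi).symm

lemma Cg.trans {n : ℕ} {f g h : PowerSeries R} (h1 : Cg n f g) (h2 : Cg n g h) : Cg n f h :=
  fun i hi => (h1 i hi).trans (h2 i hi)

lemma Cg.mul {n : ℕ} {f₁ g₁ f₂ g₂ : PowerSeries R} (h1 : Cg n f₁ g₁) (h2 : Cg n f₂ g₂) :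
    Cg n (f₁ * f₂) (g₁ * g₂) := by
  intro i hi
  rw [coeff_mul, coeff_mul]
  refine Finset.sum_congr rfl fun p hp => ?_
  have hp1 : p.1 ≤ i := Finset.HasAntidiagonal.antidiagonal.fst_le hp
  have hp2 : p.2 ≤ i := Finset.HasAntidiagonal.antidiagonal.snd_le hp
  rw [h1 _ (le_trans hp1 hi), h2 _ (le_trans hp2 hi)]

lemma Cg.pow {n : ℕ} {f g : PowerSeries R} (h : Cg n f g) (m : ℕ) :
    Cg n (f ^ m) (g ^ m) := by
  induction m with
  | zero => simpa using Cg.refl n 1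
  | succ m ih => rw [pow_succ, pow_succ]; exact ih.mul h

lemma Cg.prod {n : ℕ} {ι : Type*} {s : Finset ι} {f g : ι → PowerSeries R}
    (h : ∀ i ∈ s, Cg n (f i) (g i)) : Cg n (∏ i ∈ s, f i) (∏ i ∈ s, g i) := by
  classical
  induction s using Finset.induction_on with
  | empty => simpa using Cg.refl n 1
  | @insert a s' hx ih =>
      rw [Finset.prod_insert hx, Finset.prod_insert hx]
      exact (h a (mem_insert_self a s')).mul (ih fun i hi => h i (mem_insert_of_mem hi))

lemma Cg_one_sub_X_pow {n m : ℕ} (h : n < m) :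
    Cg n ((1 : PowerSeries R) - X ^ m) 1 := by
  intro i hi
  rw [map_sub, coeff_X_pow, if_neg (by omega), sub_zero]

lemma coeff_prod_superset {f : ℕ → PowerSeries R} {n : ℕ}
    (hf : ∀ i, n ≤ i → Cg n (f i) 1) {s : Finset ℕ} (hs : Finset.range (n+1) ⊆ s) :
    coeff n (∏ i ∈ s, f i) = coeff n (∏ i ∈ Finset.range (n+1), f i) := by
  rw [← Finset.prod_sdiff hs]
  have h1 : Cg n (∏ i ∈ s \ Finset.range (n+1), f i) 1 := by
    have : Cg n (∏ i ∈ s \ Finset.range (n+1), f i) (∏ i ∈ s \ Finset.range (n+1), 1) :=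
      Cg.prod fun i hi => hf i (by
        have := (Finset.mem_sdiff.1 hi).2
        simp only [Finset.mem_range] at this; omega)
    simpa using this
  have := h1.mul (Cg.refl n (∏ i ∈ Finset.range (n+1), f i))
  simpa using this n le_rfl

/-- truncated products defining `E` -/
noncomputable def PE (k N : ℕ) : P := ∏ i ∈ Finset.range N, (1 - (X : P) ^ (k * (i + 1)))

lemma factor_cg (k : ℕ) (hk : 1 ≤ k) (i n : ℕ) (hn : n ≤ i) :
    Cg n ((1 : P) - X ^ (k * (i+1))) 1 :=
  Cg_one_sub_X_pow (by nlinarith)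

instance : T2Space P := by
  have he : Topology.IsEmbedding (fun f => fun n => (coeff n) f : P → ℕ → ℤ) :=
    ⟨⟨rfl⟩, fun f g h => PowerSeries.ext fun n => congrFun h n⟩
  exact he.t2Space

lemma hasProdE (k : ℕ) (hk : 1 ≤ k) :
    HasProd (fun i => 1 - (X : P) ^ (k * (i + 1)))
      (mk fun n => coeff n (PE k (n+1))) := by
  have hinst : (inferInstance : TopologicalSpace P)
      = TopologicalSpace.induced (fun f => fun n => (coeff n) f) inferInstance := rfl
  rw [HasProd]
  rw [show (nhds (mk fun n => coeff n (PE k (n+1)) : P)) = @nhds P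
      (TopologicalSpace.induced (fun f => fun n => (coeff n) f) inferInstance) _ from rfl,
    nhds_induced, tendsto_comap_iff, tendsto_pi_nhds]
  intro n
  refine Tendsto.congr' (EventuallyEq.symm ?_) tendsto_const_nhds
  refine eventually_atTop.2 ⟨Finset.range (n+1), fun s hs => ?_⟩
  simp only [Function.comp]
  rw [coeff_mk, coeff_prod_superset (fun j hj => factor_cg k hk j n hj) hs]
  rfl

lemma coeff_E (k : ℕ) (hk : 1 ≤ k) (n : ℕ) :
    coeff n (E k) = coeff n (PE k (n+1)) := by
  rw [E, (hasProdE k hk).tprod_eq, coeff_mk]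

lemma cg_E (k : ℕ) (hk : 1 ≤ k) {n N : ℕ} (h : n < N) : Cg n (E k) (PE k N) := by
  intro i hi
  rw [coeff_E k hk i, PE]
  exact (coeff_prod_superset (fun j hj => factor_cg k hk j i hj)
    (Finset.range_subset_range.2 (by omega))).symm

end EMT
namespace EMT
open Finset PowerSeries

lemma sum_range_mul3 {M : Type*} [AddCommMonoid M] (c : ℕ) (h : ℕ → M)
    (h0 : ∀ k, k ≤ 3*c → ¬ (3 ∣ k) → h k = 0) :
    ∑ k ∈ Finset.range (3*c+1), h k = ∑ j ∈ Finset.range (c+1), h (3*j) := by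
  classical
  rw [← Finset.sum_image (s := Finset.range (c+1)) (g := fun j => 3*j) (f := h)
    (by intro x _ y _ hxy; simp only [] at hxy; omega)]
  refine (Finset.sum_subset ?_ ?_).symm
  · intro x hx
    simp only [Finset.mem_image, Finset.mem_range] at hx ⊢
    obtain ⟨j, hj, rfl⟩ := hx; omega
  · intro x hx hnx
    simp only [Finset.mem_image, Finset.mem_range] at hx hnx
    refine h0 x (by omega) fun ⟨j, hj⟩ => hnx ⟨j, by omega⟩

noncomputable def U : P →+* P where
  toFun f := mk fun n => if 3 ∣ n then coeff (n/3) f else 0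
  map_one' := by
    ext n
    simp only [coeff_mk, coeff_one]
    split_ifs <;> first | rfl | omega
  map_zero' := by ext n; simp
  map_add' f g := by
    ext n; simp only [coeff_mk, map_add]
    split_ifs <;> simp
  map_mul' f g := by
    ext n
    simp only [coeff_mk]
    split_ifs with h3
    · obtain ⟨c, rfl⟩ := h3
      rw [Nat.mul_div_cancel_left c (by norm_num), coeff_mul, coeff_mul,
        Finset.Nat.sum_antidiagonal_eq_sum_range_succ_mk,
        Finset.Nat.sum_antidiagonal_eq_sum_range_succ_mk]
      rw [sum_range_mul3 c (fun k => coeff k (mk fun n => if 3 ∣ n then coeff (n/3) f else 0 : P)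
            * coeff (3*c - k) (mk fun n => if 3 ∣ n then coeff (n/3) g else 0 : P))
        (by
          intro k hk hk3
          simp only [coeff_mk]
          rw [if_neg hk3, zero_mul])]
      refine Finset.sum_congr rfl fun j hj => ?_
      simp only [Finset.mem_range] at hj
      simp only [coeff_mk]
      have hd1 : (3:ℕ) ∣ 3*j := ⟨j, rfl⟩
      have hd2 : (3:ℕ) ∣ 3*c - 3*j := ⟨c - j, by omega⟩
      rw [if_pos hd1, if_pos hd2,
        Nat.mul_div_cancel_left j (by norm_num),
        show 3*c - 3*j = 3*(c-j) by omega,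
        Nat.mul_div_cancel_left (c-j) (by norm_num)]
    · rw [coeff_mul]
      refine (Finset.sum_eq_zero fun p hp => ?_).symm
      have hps := Finset.HasAntidiagonal.mem_antidiagonal.1 hp
      simp only [coeff_mk]
      by_cases h1 : 3 ∣ p.1
      · rw [if_neg (fun h2 : 3 ∣ p.2 => h3 (hps ▸ Nat.dvd_add h1 h2)), mul_zero]
      · rw [if_neg h1, zero_mul]

lemma coeff_U (f : P) (n : ℕ) :
    coeff n (U f) = if 3 ∣ n then coeff (n/3) f else 0 := by
  rw [show U f = mk fun m => if 3 ∣ m then coeff (m/3) f else 0 from rfl, coeff_mk]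

lemma coeff_U_mul3 (f : P) (n : ℕ) : coeff (3*n) (U f) = coeff n f := by
  rw [coeff_U, if_pos ⟨n, rfl⟩, Nat.mul_div_cancel_left n (by norm_num)]

lemma U_inj : Function.Injective (U : P →+* P) := by
  intro f g h
  ext n
  rw [← coeff_U_mul3 f, ← coeff_U_mul3 g, h]

lemma cg_U {n : ℕ} {f g : P} (h : Cg n f g) : Cg n (U f) (U g) := by
  intro i hi
  rw [coeff_U, coeff_U]
  split_ifs with h3
  · exact h _ (le_trans (Nat.div_le_self i 3) hi)
  · rfl

lemma U_X_pow (m : ℕ) : U ((X : P) ^ m) = X ^ (3*m) := by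
  ext n
  rw [coeff_U, coeff_X_pow, coeff_X_pow]
  split_ifs <;> first | rfl | omega

lemma U_one_sub_X_pow (m : ℕ) : U ((1 : P) - X ^ m) = 1 - X ^ (3*m) := by
  rw [map_sub, map_one, U_X_pow]

lemma U_PE (k N : ℕ) : U (PE k N) = PE (3*k) N := by
  simp only [PE, map_prod, U_one_sub_X_pow]
  refine Finset.prod_congr rfl fun i _ => ?_
  rw [mul_assoc]

noncomputable def V (f : P) : P := mk fun n => coeff (3*n) f

lemma coeff_V (f : P) (n : ℕ) : coeff n (V f) = coeff (3*n) f := by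
  rw [show V f = mk fun m => coeff (3*m) f from rfl, coeff_mk]

lemma V_mul_U (f g : P) : V (f * U g) = V f * g := by
  ext n
  rw [coeff_V, coeff_mul, coeff_mul, Finset.Nat.sum_antidiagonal_eq_sum_range_succ_mk,
    Finset.Nat.sum_antidiagonal_eq_sum_range_succ_mk,
    sum_range_mul3 n (fun k => coeff k f * coeff (3*n-k) (U g))
      (by
        intro k hk hk3
        rw [coeff_U, if_neg (by omega), mul_zero])]
  refine Finset.sum_congr rfl fun j hj => ?_
  simp only [Finset.mem_range] at hj
  rw [coeff_V, show 3*n - 3*j = 3*(n-j) by omega, coeff_U_mul3]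

lemma U_E1 : E 3 = U (E 1) := by
  ext n
  rw [coeff_E 3 (by norm_num) n, show PE 3 (n+1) = PE (3*1) (n+1) by norm_num, ← U_PE,
    coeff_U, coeff_U]
  split_ifs with h3
  · exact (cg_E 1 (by norm_num) (show n/3 < n+1 by omega) (n/3) le_rfl).symm
  · rfl

noncomputable def E9 : P := U (E 3)

end EMT
namespace EMT
open PowerSeries

noncomputable def gb : ℕ → ℕ → P
  | _, 0 => 1
  | 0, _+1 => 0
  | m+1, r+1 => gb m r + X^(r+1) * gb m (r+1)

lemma gb_zero (m : ℕ) : gb m 0 = 1 := by cases m <;> simp [gb]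

lemma gb_succ (m r : ℕ) : gb (m+1) (r+1) = gb m r + X^(r+1) * gb m (r+1) := by
  simp [gb]

lemma gb_high : ∀ m r, m < r → gb m r = 0 := by
  intro m
  induction m with
  | zero => intro r hr; cases r with
      | zero => omega
      | succ r => simp [gb]
  | succ m ih =>
      intro r hr
      cases r with
      | zero => omega
      | succ r => rw [gb_succ, ih r (by omega), ih (r+1) (by omega), mul_zero, add_zero]

lemma gb_diag : ∀ m, gb m m = 1 := by
  intro m
  induction m with
  | zero => simp [gb]
  | succ m ih => rw [gb_succ, ih, gb_high m (m+1) (by omega), mul_zero, add_zero]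

lemma gb_one_aux : ∀ m, (1:P) + X * gb m 1 = X^m + gb m 1 := by
  intro m
  induction m with
  | zero => simp [gb]
  | succ m ih =>
      rw [show (1:ℕ) = 0 + 1 from rfl, gb_succ, gb_zero]
      push_cast
      linear_combination X * ih

lemma pascal2 : ∀ m r, gb (m+1) (r+1) = X^(m-r) * gb m r + gb m (r+1) := by
  intro m
  induction m with
  | zero =>
      intro r
      cases r with
      | zero => simp [gb]
      | succ r => simp [gb, gb_high 0 (r+1) (by omega)]
  | succ m ih =>
      intro r
      cases r with
      | zero =>
          rw [gb_zero, Nat.sub_zero, mul_one]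
          linear_combination gb_one_aux (m+1) + gb_succ (m+1) 0 + gb_zero (m+1)
      | succ r =>
          rcases Nat.lt_or_ge r m with hrm | hrm
          · have I2 := ih (r+1)
            rw [show m - (r+1) = m-r-1 by omega] at I2
            have e1 : (X:P)^(r+1+1) * X^(m-r-1) = X^(m+1) := by
              rw [← pow_add]; congr 1; omega
            have e2 : (X:P)^(m-r) * X^(r+1) = X^(m+1) := by
              rw [← pow_add]; congr 1; omega
            rw [show m+1-(r+1) = m-r by omega]
            linear_combination (gb_succ (m+1) (r+1)) + (X:P)^(r+1+1) * I2
              + gb m (r+1) * e1 - (X:P)^(m-r) * (gb_succ m r)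
              - gb m (r+1) * e2 + (ih r) - (gb_succ m (r+1))
          · rcases Nat.eq_or_lt_of_le hrm with heq | hlt
            · subst heq
              rw [show m+1-(m+1) = 0 by omega, pow_zero, one_mul, gb_diag, gb_diag,
                gb_high (m+1) (m+2) (by omega), add_zero]
            · rw [gb_high (m+1+1) (r+1+1) (by omega), gb_high (m+1) (r+1) (by omega),
                gb_high (m+1) (r+1+1) (by omega), mul_zero, add_zero]

lemma PE_succ (k N : ℕ) : PE k (N+1) = PE k N * (1 - X^(k*(N+1))) := by
  rw [PE, PE, Finset.prod_range_succ]

lemma gb_mul_PE : ∀ m r, r ≤ m → PE 1 r * PE 1 (m-r) * gb m r = PE 1 m := by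
  intro m
  induction m with
  | zero => intro r hr; interval_cases r; simp [gb_zero, PE]
  | succ m ih =>
      intro r hr
      cases r with
      | zero => simp [gb_zero, PE]
      | succ r =>
          rcases Nat.eq_or_lt_of_le hr with heq | hlt
          · rw [← heq, gb_diag, Nat.sub_self]
            simp [PE]
          · have hrm : r < m := by omega
            have hp1 : PE 1 (r+1) = PE 1 r * (1 - X^(r+1)) := by
              rw [PE_succ]; norm_num
            have hp4 : PE 1 (m-r) = PE 1 (m-r-1) * (1 - X^(m-r)) := by
              conv_lhs => rw [show m-r = (m-r-1)+1 by omega]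
              rw [PE_succ, show 1*(m-r-1+1) = m-r by omega]
            have hp3 : PE 1 (m+1) = PE 1 m * (1 - X^(m+1)) := by
              rw [PE_succ]; norm_num
            have ih1 := ih r (by omega)
            have ih2 := ih (r+1) (by omega)
            rw [show m - (r+1) = m-r-1 by omega] at ih2
            have S := gb_succ m r
            have e1 : (X:P)^(r+1) * X^(m-r) = X^(m+1) := by
              rw [← pow_add]; congr 1; omega
            rw [show m+1-(r+1) = m-r by omega]
            linear_combination (PE 1 (r+1)) * (PE 1 (m-r)) * S
              + (PE 1 (m-r)) * (gb m r) * hp1 + (1 - (X:P)^(r+1)) * ih1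
              + (X:P)^(r+1) * (PE 1 (r+1)) * (gb m (r+1)) * hp4
              + (X:P)^(r+1) * (1 - (X:P)^(m-r)) * ih2 - (PE 1 m) * e1 - hp3

end EMT
namespace EMT
open PowerSeries

/-- triangular number exponent, `e k = k(k+1)/2` -/
def e (k : ℤ) : ℕ := (k*(k+1)/2).toNat

lemma e_nonneg (k : ℤ) : 0 ≤ k*(k+1)/2 := by
  rcases le_or_gt 0 k with h | h
  · exact Int.ediv_nonneg (by nlinarith) (by norm_num)
  · exact Int.ediv_nonneg (by nlinarith) (by norm_num)

lemma e_cast (k : ℤ) : (e k : ℤ) = k*(k+1)/2 := Int.toNat_of_nonneg (e_nonneg k)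

lemma e_two (k : ℤ) : 2 * (e k : ℤ) = k*(k+1) := by
  rw [e_cast]
  exact Int.mul_ediv_cancel' (Int.even_mul_succ_self k).two_dvd

lemma e_succ (k : ℤ) : (e (k+1) : ℤ) = e k + k + 1 := by
  have h1 := e_two k
  have h2 := e_two (k+1)
  have h3 : (k+1)*(k+1+1) = k*(k+1) + 2*(k+1) := by ring
  linarith

lemma e_mod3 (k : ℤ) : (e k) % 3 ≠ 2 := by
  have h2 := e_two k
  have hk := Int.mul_ediv_add_emod k 3
  have hbd : 0 ≤ k % 3 ∧ k % 3 < 3 := ⟨Int.emod_nonneg k (by norm_num), Int.emod_lt_of_pos k (by norm_num)⟩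
  set s := k % 3 with hs
  set t := k / 3 with ht
  have hexp : k*(k+1) = 3*(3*t*t + t*(2*s+1)) + s*(s+1) := by
    rw [← hk]; ring
  set B := 3*t*t + t*(2*s+1) with hB
  obtain ⟨h0, h3⟩ := hbd
  interval_cases s <;> (rw [hexp] at h2; omega)

/-- the two-variable Cauchy product -/
noncomputable def QP (N : ℕ) : Polynomial P :=
  ∏ i ∈ Finset.range N,
    ((1 - Polynomial.C ((X:P)^(i+1)) * Polynomial.X) * (Polynomial.X - Polynomial.C ((X:P)^i)))

/-- coefficients in Cauchy's identity -/
noncomputable def v (N j : ℕ) : P := (-1)^(N+j) * X^(e ((j:ℤ) - N)) * gb (2*N) j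

lemma gb_step (N j : ℕ) :
    gb (2*N+2) (j+2) = (1 + (X:P)^(2*N+1)) * gb (2*N) (j+1)
      + (X:P)^(j+2) * gb (2*N) (j+2) + (X:P)^(2*N-j) * gb (2*N) j := by
  rcases Nat.lt_or_ge j (2*N) with hj | hj
  · have h1 : gb (2*N+2) (j+2) = gb (2*N+1) (j+1) + X^(j+2) * gb (2*N+1) (j+2) :=
      gb_succ (2*N+1) (j+1)
    have h2 : gb (2*N+1) (j+1) = (X:P)^(2*N-j) * gb (2*N) j + gb (2*N) (j+1) := pascal2 (2*N) j
    have h3 : gb (2*N+1) (j+2) = (X:P)^(2*N-(j+1)) * gb (2*N) (j+1) + gb (2*N) (j+2) :=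
      pascal2 (2*N) (j+1)
    have e1 : (X:P)^(j+2) * X^(2*N-(j+1)) = X^(2*N+1) := by
      rw [← pow_add]; congr 1; omega
    linear_combination h1 + (X:P)^(j+2) * h3 + h2 + gb (2*N) (j+1) * e1
  · rcases Nat.eq_or_lt_of_le hj with heq | hlt
    · subst heq
      rw [gb_high (2*N) (2*N+1) (by omega), gb_high (2*N) (2*N+2) (by omega),
        gb_diag, gb_diag, Nat.sub_self, pow_zero]
      ring
    · rw [gb_high (2*N+2) (j+2) (by omega), gb_high (2*N) (j+1) (by omega),
        gb_high (2*N) (j+2) (by omega), gb_high (2*N) j (by omega)]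
      ring

end EMT
namespace EMT
open PowerSeries

lemma core (N j : ℕ) :
    (X:P)^(e ((j:ℤ)+1-N)) * gb (2*N+2) (j+2)
      = (X:P)^N * (X:P)^(e ((j:ℤ)+2-N)) * gb (2*N) (j+2)
      + (1 + (X:P)^(2*N+1)) * (X:P)^(e ((j:ℤ)+1-N)) * gb (2*N) (j+1)
      + (X:P)^(N+1) * (X:P)^(e ((j:ℤ)-N)) * gb (2*N) j := by
  rcases le_or_gt j (2*N) with hj | hj
  · have hst := gb_step N j
    have m1 : (X:P)^(e ((j:ℤ)+1-N)) * (X:P)^(j+2) = (X:P)^N * (X:P)^(e ((j:ℤ)+2-N)) := by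
      rw [← pow_add, ← pow_add]
      congr 1
      have h := e_succ ((j:ℤ)+1-N)
      rw [show (j:ℤ)+1-N+1 = (j:ℤ)+2-N by ring] at h
      omega
    have m2 : (X:P)^(N+1) * (X:P)^(e ((j:ℤ)-N)) = (X:P)^(e ((j:ℤ)+1-N)) * (X:P)^(2*N-j) := by
      rw [← pow_add, ← pow_add]
      congr 1
      have h := e_succ ((j:ℤ)-N)
      rw [show (j:ℤ)-N+1 = (j:ℤ)+1-N by ring] at h
      omega
    linear_combination (X:P)^(e ((j:ℤ)+1-N)) * hst + gb (2*N) (j+2) * m1 - gb (2*N) j * m2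
  · rw [gb_high (2*N+2) (j+2) (by omega), gb_high (2*N) (j+1) (by omega),
      gb_high (2*N) (j+2) (by omega), gb_high (2*N) j (by omega)]
    ring

lemma vstep (N j : ℕ) :
    v (N+1) (j+2) = -(X:P)^N * v N (j+2) + (1 + (X:P)^(2*N+1)) * v N (j+1)
      - (X:P)^(N+1) * v N j := by
  rw [v, v, v, v]
  rw [show ((j+2:ℕ):ℤ) - ((N+1:ℕ):ℤ) = (j:ℤ)+1-N by push_cast; ring,
    show ((j+2:ℕ):ℤ) - (N:ℤ) = (j:ℤ)+2-N by push_cast; ring,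
    show ((j+1:ℕ):ℤ) - (N:ℤ) = (j:ℤ)+1-N by push_cast; ring,
    show 2*(N+1) = 2*N+2 by ring]
  have hs1 : ((-1:P))^((N+1)+(j+2)) = -((-1:P))^(N+j) := by
    rw [show (N+1)+(j+2) = (N+j)+3 by omega, pow_add]; ring
  have hs2 : ((-1:P))^(N+(j+2)) = ((-1:P))^(N+j) := by
    rw [show N+(j+2) = (N+j)+2 by omega, pow_add]; ring
  have hs3 : ((-1:P))^(N+(j+1)) = -((-1:P))^(N+j) := by
    rw [show N+(j+1) = (N+j)+1 by omega, pow_add]; ring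
  rw [hs1, hs2, hs3]
  linear_combination (-((-1:P))^(N+j)) * core N j

lemma QP_succ (N : ℕ) : QP (N+1) = QP N *
    ((1 - Polynomial.C ((X:P)^(N+1)) * Polynomial.X) * (Polynomial.X - Polynomial.C ((X:P)^N))) := by
  rw [QP, QP, Finset.prod_range_succ]

lemma G_expand (N : ℕ) :
    (1 - Polynomial.C ((X:P)^(N+1)) * Polynomial.X) * (Polynomial.X - Polynomial.C ((X:P)^N))
      = Polynomial.C (-(X:P)^N) + Polynomial.C (1 + (X:P)^(2*N+1)) * Polynomial.X
        + Polynomial.C (-(X:P)^(N+1)) * Polynomial.X^2 := by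
  have h : (X:P)^(2*N+1) = X^(N+1) * X^N := by rw [← pow_add]; congr 1; omega
  rw [h]
  simp only [map_add, map_neg, map_one, map_mul]
  ring

lemma coeff_mul_quad2 (p : Polynomial P) (a b c : P) (j : ℕ) :
    (p * (Polynomial.C a + Polynomial.C b * Polynomial.X + Polynomial.C c * Polynomial.X^2)).coeff (j+2)
      = a * p.coeff (j+2) + b * p.coeff (j+1) + c * p.coeff j := by
  rw [mul_add, mul_add, Polynomial.coeff_add, Polynomial.coeff_add, Polynomial.coeff_mul_C,
    show p * (Polynomial.C b * Polynomial.X) = (p * Polynomial.X) * Polynomial.C b by ring,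
    Polynomial.coeff_mul_C, Polynomial.coeff_mul_X,
    show p * (Polynomial.C c * Polynomial.X^2) = ((p * Polynomial.X) * Polynomial.X) * Polynomial.C c
      by ring,
    Polynomial.coeff_mul_C, Polynomial.coeff_mul_X, Polynomial.coeff_mul_X]
  ring

lemma coeff_mul_quad1 (p : Polynomial P) (a b c : P) :
    (p * (Polynomial.C a + Polynomial.C b * Polynomial.X + Polynomial.C c * Polynomial.X^2)).coeff 1
      = a * p.coeff 1 + b * p.coeff 0 := by
  rw [mul_add, mul_add, Polynomial.coeff_add, Polynomial.coeff_add, Polynomial.coeff_mul_C,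
    show p * (Polynomial.C b * Polynomial.X) = (p * Polynomial.X) * Polynomial.C b by ring,
    Polynomial.coeff_mul_C, Polynomial.coeff_mul_X,
    show p * (Polynomial.C c * Polynomial.X^2) = ((p * Polynomial.X) * Polynomial.X) * Polynomial.C c
      by ring,
    Polynomial.coeff_mul_C, show (1:ℕ) = 0 + 1 from rfl, Polynomial.coeff_mul_X,
    Polynomial.coeff_mul_X_zero]
  ring

lemma coeff_mul_quad0 (p : Polynomial P) (a b c : P) :
    (p * (Polynomial.C a + Polynomial.C b * Polynomial.X + Polynomial.C c * Polynomial.X^2)).coeff 0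
      = a * p.coeff 0 := by
  rw [mul_add, mul_add, Polynomial.coeff_add, Polynomial.coeff_add, Polynomial.coeff_mul_C,
    show p * (Polynomial.C b * Polynomial.X) = (p * Polynomial.X) * Polynomial.C b by ring,
    Polynomial.coeff_mul_C, Polynomial.coeff_mul_X_zero,
    show p * (Polynomial.C c * Polynomial.X^2) = ((p * Polynomial.X) * Polynomial.X) * Polynomial.C c
      by ring,
    Polynomial.coeff_mul_C, Polynomial.coeff_mul_X_zero]
  ring

lemma QP_coeff : ∀ N j, (QP N).coeff j = v N j := by
  intro N
  induction N with
  | zero =>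
      intro j
      cases j with
      | zero =>
          rw [show QP 0 = 1 by rw [QP]; rfl]
          rw [v, Polynomial.coeff_one]
          norm_num [gb_zero]
          rw [show e 0 = 0 by norm_num [e], pow_zero]
      | succ j =>
          rw [show QP 0 = 1 by rw [QP]; rfl]
          rw [v, Polynomial.coeff_one, gb_high 0 (j+1) (by omega)]
          simp
  | succ N ih =>
      intro j
      rw [QP_succ, G_expand]
      cases j with
      | zero =>
          rw [coeff_mul_quad0, ih 0, v, v, gb_zero, gb_zero]
          have hsign : ((-1:P))^((N+1)+0) = -((-1:P))^(N+0) := by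
            rw [show (N+1)+0 = (N+0)+1 by omega, pow_add]; ring
          have hexp : (X:P)^N * (X:P)^(e ((0:ℕ) - (N:ℤ))) = (X:P)^(e ((0:ℕ) - ((N+1:ℕ)):ℤ)) := by
            rw [← pow_add]
            congr 1
            have h := e_succ (-(N:ℤ)-1)
            rw [show -(N:ℤ)-1+1 = -(N:ℤ) by ring] at h
            push_cast
            rw [show ((0:ℤ) - (N+1)) = -(N:ℤ)-1 by ring, show (0:ℤ) - N = -(N:ℤ) by ring]
            omega
          rw [hsign]
          linear_combination (-(-1:P)^(N+0)) * hexp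
      | succ j =>
          cases j with
          | zero =>
              rw [coeff_mul_quad1, ih 1, ih 0, v, v, v, gb_zero]
              have h1 : gb (2*(N+1)) 1 = 1 + (X:P)^(2*N+1) + X * gb (2*N) 1 := by
                rw [show 2*(N+1) = (2*N+1)+1 by ring, show (1:ℕ) = 0+1 from rfl, gb_succ,
                  gb_zero, pascal2 (2*N) 0, gb_zero]
                rw [show 2*N-0 = 2*N by omega]
                ring
              rw [show (0:ℕ)+1 = 1 from rfl, h1,
                show ((1:ℕ):ℤ) - ((N+1:ℕ):ℤ) = ((0:ℕ):ℤ) - (N:ℤ) by push_cast; ring,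
                show ((-1:P))^(N+1+1) = (-1:P)^(N+0) by
                  rw [show N+1+1 = (N+0)+2 by omega, pow_add]; ring,
                show ((-1:P))^(N+1) = -((-1:P))^(N+0) by
                  rw [show N+1 = (N+0)+1 by omega, pow_add]; ring]
              have m : (X:P)^(e (((0:ℕ):ℤ) - (N:ℤ))) * (X:P)
                  = (X:P)^N * (X:P)^(e (((1:ℕ):ℤ) - (N:ℤ))) := by
                rw [← pow_succ, ← pow_add]
                congr 1
                have h := e_succ (-(N:ℤ))
                rw [show -(N:ℤ)+1 = 1 - (N:ℤ) by ring] at h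
                rw [show ((0:ℕ):ℤ) - (N:ℤ) = -(N:ℤ) by push_cast; ring,
                  show ((1:ℕ):ℤ) - (N:ℤ) = 1 - (N:ℤ) by push_cast; ring]
                omega
              linear_combination (-((-1:P))^(N+0)) * gb (2*N) 1 * m
          | succ j =>
              rw [coeff_mul_quad2, ih (j+2), ih (j+1), ih j, vstep]
              ring

end EMT
namespace EMT
open PowerSeries

lemma QP_natDegree (N : ℕ) : (QP N).natDegree ≤ 2*N := by
  refine le_trans (Polynomial.natDegree_prod_le _ _) ?_
  refine le_trans (Finset.sum_le_sum (g := fun _ => 2) (fun i _ => ?_)) ?_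
  · refine le_trans Polynomial.natDegree_mul_le
      (le_trans (add_le_add (b := 1) (d := 1) ?_ ?_) (by norm_num))
    · refine le_trans (Polynomial.natDegree_sub_le _ _) (max_le (by simp) ?_)
      exact le_trans (Polynomial.natDegree_C_mul_le _ _) Polynomial.natDegree_X_le
    · refine le_trans (Polynomial.natDegree_sub_le _ _) (max_le Polynomial.natDegree_X_le (by simp))
  · simp [Finset.sum_const, Finset.card_range]
    omega

lemma master (M : ℕ) :
    PE 1 (M+1) * PE 1 M = ∑ i ∈ Finset.range (2*(M+1)+1), v (M+1) (i+1) * ((i:P)+1) := by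
  have hfac : QP (M+1) = (Polynomial.X - 1) *
      ((∏ i ∈ Finset.range (M+1), (1 - Polynomial.C ((X:P)^(i+1)) * Polynomial.X)) *
        ∏ i ∈ Finset.range M, (Polynomial.X - Polynomial.C ((X:P)^(i+1)))) := by
    rw [QP, Finset.prod_mul_distrib, Finset.prod_range_succ'
      (f := fun i => (Polynomial.X - Polynomial.C ((X:P)^i)))]
    simp only [pow_zero, map_one]
    ring
  have hev : Polynomial.eval 1 (Polynomial.derivative (QP (M+1))) = PE 1 (M+1) * PE 1 M := by
    rw [hfac, Polynomial.derivative_mul]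
    simp [Polynomial.eval_prod, PE]
  have hdeg : (Polynomial.derivative (QP (M+1))).natDegree < 2*(M+1)+1 :=
    lt_of_le_of_lt (le_trans (Polynomial.natDegree_derivative_le _)
      (Nat.sub_le _ _)) (lt_of_le_of_lt (QP_natDegree (M+1)) (by omega))
  rw [← hev, Polynomial.eval_eq_sum_range' hdeg 1]
  simp only [one_pow, mul_one, Polynomial.coeff_derivative, QP_coeff]

end EMT
namespace EMT
open PowerSeries

lemma coeff_X_pow_mul_ite (f : P) (a n : ℕ) :
    coeff n ((X:P)^a * f) = if a ≤ n then coeff (n-a) f else 0 := by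
  split_ifs with h
  · rw [show n = (n-a) + a by omega]
    rw [PowerSeries.coeff_X_pow_mul, show n - a + a - a = n - a by omega]
  · rw [coeff_mul]
    refine Finset.sum_eq_zero fun p hp => ?_
    have hp1 : p.1 ≤ n := Finset.HasAntidiagonal.antidiagonal.fst_le hp
    rw [coeff_X_pow, if_neg (by omega), zero_mul]

lemma PE_constCoeff (t : ℕ) : constantCoeff (PE 1 t) = 1 := by
  rw [PE, map_prod]
  refine Finset.prod_eq_one fun i _ => ?_
  rw [map_sub, map_one, map_pow, constantCoeff_X, zero_pow (by omega), sub_zero]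

lemma cg_cancel {n : ℕ} {x y w : P} (hw : IsUnit w) (h : Cg n (x*w) (y*w)) : Cg n x y := by
  obtain ⟨u, rfl⟩ := hw
  have h2 := h.mul (Cg.refl n ((u⁻¹ : Pˣ) : P))
  intro i hi
  have h3 := h2 i hi
  rwa [Units.mul_inv_cancel_right, Units.mul_inv_cancel_right] at h3

lemma cg_PE_big {n a K : ℕ} (h1 : n < a) (h2 : a ≤ K) : Cg n (PE 1 a) (PE 1 K) := by
  intro i hi
  rw [PE, PE,
    coeff_prod_superset (fun j hj => factor_cg 1 le_rfl j i hj)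
      (Finset.range_subset_range.2 (by omega) : Finset.range (i+1) ⊆ Finset.range a),
    coeff_prod_superset (fun j hj => factor_cg 1 le_rfl j i hj)
      (Finset.range_subset_range.2 (by omega) : Finset.range (i+1) ⊆ Finset.range K)]

lemma e_ge_self (k : ℤ) (hk : 0 ≤ k) : k ≤ (e k : ℤ) := by
  have h := e_two k; nlinarith

lemma e_neg_ge (k : ℤ) (hk : k < 0) : -k - 1 ≤ (e k : ℤ) := by
  have h2e := e_two k
  rcases le_or_gt k (-2) with h2 | h2
  · have hp : 0 ≤ (-(k+1)) * (-(k+2)) := mul_nonneg (by omega) (by omega)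
    nlinarith
  · have hk1 : k = -1 := by omega
    subst hk1
    norm_num

theorem coeff_E1_cube (n : ℕ) (hn : n % 3 = 2) : coeff n ((E 1)^3) = 0 := by
  set M := 2*n+3 with hM
  have h3 : Cg n ((E 1)^3) (PE 1 (M+1) * (PE 1 (M+1) * PE 1 M)) := by
    have c1 : Cg n (E 1) (PE 1 (M+1)) := cg_E 1 le_rfl (by omega)
    have c2 : Cg n (E 1) (PE 1 M) := cg_E 1 le_rfl (by omega)
    have hmul := c1.mul (c1.mul c2)
    intro i hi
    rw [show (E 1)^3 = E 1 * (E 1 * E 1) by ring]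
    exact hmul i hi
  rw [h3 n le_rfl, master M, Finset.mul_sum, map_sum]
  refine Finset.sum_eq_zero fun i hi => ?_
  simp only [Finset.mem_range] at hi
  set T := e (((i+1:ℕ):ℤ) - ((M+1:ℕ):ℤ)) with hT
  have hterm : PE 1 (M+1) * (v (M+1) (i+1) * ((i:P)+1))
      = PowerSeries.C ((-1)^((M+1)+(i+1)) * ((i:ℤ)+1))
        * ((X:P)^T * (PE 1 (M+1) * gb (2*(M+1)) (i+1))) := by
    rw [v, ← hT]
    simp only [map_mul, map_pow, map_neg, map_one, map_add, map_natCast]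
    ring
  rw [hterm, PowerSeries.coeff_C_mul]
  rcases le_or_gt T n with hTn | hTn
  · -- T ≤ n : show the coefficient of the unit-like product vanishes
    have h2T := e_two (((i+1:ℕ):ℤ) - ((M+1:ℕ):ℤ))
    have hbk1 : -((n:ℤ)+1) ≤ (i:ℤ) - M := by
      by_contra hcon
      push_neg at hcon
      have hneg := e_neg_ge (((i+1:ℕ):ℤ) - ((M+1:ℕ):ℤ)) (by push_cast; omega)
      rw [← hT] at hneg
      push_cast at hneg hcon
      omega
    have hbk2 : (i:ℤ) - M ≤ (n:ℤ) := by
      by_contra hcon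
      push_neg at hcon
      have hpos := e_ge_self (((i+1:ℕ):ℤ) - ((M+1:ℕ):ℤ)) (by push_cast; omega)
      rw [← hT] at hpos
      push_cast at hpos hcon
      omega
    have hTneqn : T ≠ n := by
      intro hc
      have hm3 := e_mod3 (((i+1:ℕ):ℤ) - ((M+1:ℕ):ℤ))
      rw [← hT, hc] at hm3
      omega
    have hle : i+1 ≤ 2*(M+1) := by omega
    have hexact := gb_mul_PE (2*(M+1)) (i+1) hle
    have hunit : IsUnit (PE 1 (i+1) * PE 1 (2*(M+1) - (i+1))) := by
      rw [PowerSeries.isUnit_iff_constantCoeff, map_mul, PE_constCoeff, PE_constCoeff, mul_one]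
      exact isUnit_one
    have hcg : Cg n (PE 1 (M+1) * gb (2*(M+1)) (i+1)) 1 := by
      refine cg_cancel hunit ?_
      have hre : PE 1 (M+1) * gb (2*(M+1)) (i+1) * (PE 1 (i+1) * PE 1 (2*(M+1)-(i+1)))
          = PE 1 (M+1) * PE 1 (2*(M+1)) := by
        rw [← hexact]; ring
      rw [hre, one_mul]
      have cgA : Cg n (PE 1 (M+1)) (PE 1 (i+1)) :=
        (cg_PE_big (a := M+1) (K := 2*(M+1)) (by omega) (by omega)).trans
          (cg_PE_big (a := i+1) (K := 2*(M+1)) (by omega) (by omega)).symm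
      have cgB : Cg n (PE 1 (2*(M+1))) (PE 1 (2*(M+1)-(i+1))) :=
        (cg_PE_big (a := 2*(M+1)-(i+1)) (K := 2*(M+1)) (by omega) (by omega)).symm
      exact cgA.mul cgB
    rw [coeff_X_pow_mul_ite, if_pos hTn, hcg (n-T) (by omega), coeff_one, if_neg (by omega), mul_zero]
  · rw [coeff_X_pow_mul_ite, if_neg (by omega), mul_zero]

end EMT
namespace EMT
open PowerSeries

noncomputable def ω : ℂ := ⟨-1/2, Real.sqrt 3 / 2⟩

lemma hω : ω^2 + ω + 1 = 0 := by
  have h3 : Real.sqrt 3 * Real.sqrt 3 = 3 := Real.mul_self_sqrt (by norm_num)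
  apply Complex.ext <;>
    simp [ω, pow_two, Complex.mul_re, Complex.mul_im, Complex.add_re, Complex.add_im] <;>
    nlinarith [h3]

lemma ω3 : ω^3 = 1 := by linear_combination (ω - 1) * hω

abbrev PC := PowerSeries ℂ

noncomputable def mp : P →+* PC := PowerSeries.map (Int.castRingHom ℂ)

lemma mp_inj : Function.Injective (mp : P → PC) := by
  intro f g h
  ext n
  have h2 := congrArg (coeff n) h
  rw [mp, coeff_map, coeff_map] at h2
  have h3 : ((coeff n f : ℤ) : ℂ) = ((coeff n g : ℤ) : ℂ) := h2
  exact_mod_cast h3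

lemma cg_map {n : ℕ} {f g : P} (h : Cg n f g) : Cg n (mp f) (mp g) := fun i hi => by
  rw [mp, coeff_map, coeff_map, h i hi]

lemma cg_rescale (c : ℂ) {n : ℕ} {f g : PC} (h : Cg n f g) :
    Cg n (rescale c f) (rescale c g) := fun i hi => by
  rw [coeff_rescale, coeff_rescale, h i hi]

lemma hωC : (C ω)^2 + C ω + 1 = 0 := by
  have h := congrArg C hω
  simpa using h

lemma hω3C : (C ω)^3 = 1 := by rw [← map_pow, ω3, map_one]

lemma mergeA (m : ℕ) (h1 : ω^m = ω ∨ ω^m = ω^2) :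
    (1 - (X:PC)^m) * (1 - (C ω * X)^m) * (1 - (C (ω^2) * X)^m) = 1 - (X:PC)^(3*m) := by
  rw [mul_pow, mul_pow, ← map_pow, ← map_pow, show ((ω^2)^m : ℂ) = (ω^m)^2 by ring,
    show 3*m = m*3 by ring, pow_mul]
  rcases h1 with h | h <;> rw [h]
  · rw [map_pow]
    linear_combination (-(X:PC)^m + (C ω)*((X:PC)^m)^2 - ((C ω) - 1)*((X:PC)^m)^3) * hωC
  · rw [show (((ω^2)^2) : ℂ) = ω^3 * ω by ring, ω3, one_mul, map_pow]
    linear_combination (-(X:PC)^m + (C ω)*((X:PC)^m)^2 - ((C ω) - 1)*((X:PC)^m)^3) * hωC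

lemma mergeB (m : ℕ) (h1 : ω^m = 1) :
    (1 - (X:PC)^m) * (1 - (C ω * X)^m) * (1 - (C (ω^2) * X)^m) = (1 - (X:PC)^m)^3 := by
  rw [mul_pow, mul_pow, ← map_pow, ← map_pow, show ((ω^2)^m : ℂ) = (ω^m)^2 by ring, h1]
  norm_num
  ring

lemma ωp1 (M : ℕ) : ω^(3*M+1) = ω := by
  rw [pow_add, pow_mul, ω3, one_pow, one_mul, pow_one]

lemma ωp2 (M : ℕ) : ω^(3*M+2) = ω^2 := by
  rw [pow_add, pow_mul, ω3, one_pow, one_mul]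

lemma ωp0 (M : ℕ) : ω^(3*M+3) = 1 := by
  rw [show 3*M+3 = 3*(M+1) by ring, pow_mul, ω3, one_pow]

noncomputable def TF (i : ℕ) : PC :=
  (1 - (X:PC)^(i+1)) * (1 - (C ω * X)^(i+1)) * (1 - (C (ω^2) * X)^(i+1))

lemma key : ∀ M : ℕ,
    (∏ i ∈ Finset.range (3*M), TF i) * (∏ i ∈ Finset.range M, (1 - (X:PC)^(9*(i+1))))
      = (∏ i ∈ Finset.range M, (1 - (X:PC)^(3*(i+1)))^3)
        * ∏ i ∈ Finset.range (3*M), (1 - (X:PC)^(3*(i+1))) := by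
  intro M
  induction M with
  | zero => simp
  | succ M ih =>
      have h3M : 3*(M+1) = (3*M)+1+1+1 := by ring
      rw [h3M, Finset.prod_range_succ (f := fun i => TF i),
        Finset.prod_range_succ (f := fun i => TF i),
        Finset.prod_range_succ (f := fun i => TF i),
        Finset.prod_range_succ (f := fun i => (1 - (X:PC)^(9*(i+1)))),
        Finset.prod_range_succ (f := fun i => (1 - (X:PC)^(3*(i+1)))^3),
        Finset.prod_range_succ (f := fun i => (1 - (X:PC)^(3*(i+1)))),
        Finset.prod_range_succ (f := fun i => (1 - (X:PC)^(3*(i+1)))),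
        Finset.prod_range_succ (f := fun i => (1 - (X:PC)^(3*(i+1))))]
      have m1 : TF (3*M) = 1 - (X:PC)^(3*(3*M+1)) := by
        simp only [TF]
        exact mergeA (3*M+1) (Or.inl (ωp1 M))
      have m2 : TF (3*M+1) = 1 - (X:PC)^(3*(3*M+1+1)) := by
        simp only [TF]
        refine mergeA (3*M+1+1) (Or.inr ?_)
        rw [show 3*M+1+1 = 3*M+2 by omega]
        exact ωp2 M
      have m3 : TF (3*M+1+1) = (1 - (X:PC)^(3*M+1+1+1))^3 := by
        simp only [TF]
        refine mergeB (3*M+1+1+1) ?_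
        rw [show 3*M+1+1+1 = 3*M+3 by omega]
        exact ωp0 M
      rw [m1, m2, m3]
      linear_combination (1 - (X:PC)^(3*(3*M+1))) * (1 - (X:PC)^(3*(3*M+2)))
        * ((1 - (X:PC)^(3*M+3))^3) * (1 - (X:PC)^(9*(M+1))) * ih

lemma mp_PE (k N : ℕ) :
    mp (PE k N) = ∏ i ∈ Finset.range N, (1 - (X:PC)^(k*(i+1))) := by
  simp only [PE, mp, map_prod, map_sub, map_one, map_pow, PowerSeries.map_X]

lemma rescale_mp_PE (c : ℂ) (k N : ℕ) :
    rescale c (mp (PE k N)) = ∏ i ∈ Finset.range N, (1 - (C c * X)^(k*(i+1))) := by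
  simp only [PE, mp, map_prod, map_sub, map_one, map_pow, PowerSeries.map_X, rescale_X]

set_option maxHeartbeats 1000000 in
lemma dagger : mp (E 1) * rescale ω (mp (E 1)) * rescale (ω^2) (mp (E 1)) * mp E9
    = (mp (E 3))^4 := by
  ext n
  set M := n+1 with hMdef
  have c1 : Cg n (E 1) (PE 1 (3*M)) := cg_E 1 le_rfl (by omega)
  have c3 : Cg n (E 3) (PE 3 M) := cg_E 3 (by norm_num) (by omega)
  have c3b : Cg n (E 3) (PE 3 (3*M)) := cg_E 3 (by norm_num) (by omega)
  have c9 : Cg n E9 (PE 9 M) := by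
    have h : Cg n E9 (U (U (PE 1 M))) := by
      rw [E9, U_E1]
      exact cg_U (cg_U (cg_E 1 le_rfl (by omega)))
    have hUU : U (U (PE 1 M)) = PE 9 M := by
      rw [U_PE, U_PE]
    rwa [hUU] at h
  have hL := (((cg_map c1).mul (cg_rescale ω (cg_map c1))).mul
      (cg_rescale (ω^2) (cg_map c1))).mul (cg_map c9)
  have hR : Cg n ((mp (E 3))^4) ((mp (PE 3 M))^3 * mp (PE 3 (3*M))) := by
    intro i hi
    rw [show (mp (E 3))^4 = (mp (E 3))^3 * mp (E 3) by ring]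
    exact (((cg_map c3).pow 3).mul (cg_map c3b)) i hi
  rw [hL n le_rfl, hR n le_rfl]
  congr 1
  rw [rescale_mp_PE, rescale_mp_PE, mp_PE, mp_PE, mp_PE, mp_PE]
  have hk := key M
  simp only [TF] at hk
  rw [Finset.prod_mul_distrib, Finset.prod_mul_distrib, Finset.prod_pow] at hk
  simp only [one_mul]
  linear_combination hk

end EMT
namespace EMT
open PowerSeries

lemma E1_const : constantCoeff (E 1) = 1 := by
  have h := coeff_E 1 le_rfl 0
  rw [← coeff_zero_eq_constantCoeff, h, show PE 1 1 = 1 - (X:P)^1 by simp [PE]]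
  simp

lemma E1_ne : (E 1) ≠ 0 := by
  intro h
  have := E1_const
  rw [h, map_zero] at this
  exact zero_ne_one this

lemma three_D0 (h : P) :
    C 3 * mp (U (V h)) = mp h + rescale ω (mp h) + rescale (ω^2) (mp h) := by
  ext n
  rw [map_add, map_add, coeff_C_mul, coeff_rescale, coeff_rescale, mp]
  simp only [coeff_map]
  obtain ⟨q, r, hr, rfl⟩ : ∃ q r, r < 3 ∧ n = 3*q + r :=
    ⟨n/3, n%3, Nat.mod_lt _ (by norm_num), (Nat.div_add_mod n 3).symm⟩
  interval_cases r
  · simp only [Nat.add_zero]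
    rw [coeff_U_mul3, coeff_V,
      show ω^(3*q) = 1 by rw [pow_mul, ω3, one_pow],
      show (ω^2)^(3*q) = 1 by
        rw [← pow_mul, show 2*(3*q) = 3*(2*q) by ring, pow_mul, ω3, one_pow]]
    push_cast
    ring
  · rw [coeff_U, if_neg (by omega), ωp1 q,
      show (ω^2)^(3*q+1) = ω^2 by
        rw [← pow_mul, show 2*(3*q+1) = 3*(2*q)+2 by ring]; exact ωp2 (2*q)]
    rw [map_zero]
    linear_combination (-((Int.castRingHom ℂ) ((coeff (3*q+1)) h))) * hω
  · rw [coeff_U, if_neg (by omega), ωp2 q,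
      show (ω^2)^(3*q+2) = ω by
        rw [← pow_mul, show 2*(3*q+2) = 3*(2*q+1)+1 by ring]; exact ωp1 (2*q+1)]
    rw [map_zero]
    linear_combination (-((Int.castRingHom ℂ) ((coeff (3*q+2)) h))) * hω

lemma hzero : mp ((E 1)^3) + C ω * rescale ω (mp ((E 1)^3))
    + C (ω^2) * rescale (ω^2) (mp ((E 1)^3)) = 0 := by
  ext n
  rw [map_add, map_add, map_zero, coeff_C_mul, coeff_C_mul, coeff_rescale, coeff_rescale, mp]
  simp only [coeff_map]
  obtain ⟨q, r, hr, rfl⟩ : ∃ q r, r < 3 ∧ n = 3*q + r :=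
    ⟨n/3, n%3, Nat.mod_lt _ (by norm_num), (Nat.div_add_mod n 3).symm⟩
  interval_cases r
  · simp only [Nat.add_zero]
    rw [show ω^(3*q) = 1 by rw [pow_mul, ω3, one_pow],
      show (ω^2)^(3*q) = 1 by
        rw [← pow_mul, show 2*(3*q) = 3*(2*q) by ring, pow_mul, ω3, one_pow]]
    linear_combination ((Int.castRingHom ℂ) ((coeff (3*q)) ((E 1)^3))) * hω
  · rw [ωp1 q,
      show (ω^2)^(3*q+1) = ω^2 by
        rw [← pow_mul, show 2*(3*q+1) = 3*(2*q)+2 by ring]; exact ωp2 (2*q)]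
    linear_combination ((Int.castRingHom ℂ) ((coeff (3*q+1)) ((E 1)^3))) * hω
      + ((Int.castRingHom ℂ) ((coeff (3*q+1)) ((E 1)^3))) * ω * ω3
  · rw [coeff_E1_cube (3*q+2) (by omega)]
    simp

lemma hC3 : (C (3:ℂ)) = (3 : PC) := map_ofNat C 3

lemma starU : U (V ((E 1)^9)) * E9^3 = (E 3)^12 := by
  have h3 : (3:P) ≠ 0 := by
    intro h
    have h2 := congrArg (constantCoeff) h
    rw [map_ofNat, map_zero] at h2
    norm_num at h2
  refine mul_left_cancel₀ h3 ?_
  apply mp_inj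
  rw [map_mul, map_mul, map_mul, map_pow, map_pow, map_ofNat]
  rw [← hC3]
  set A := mp (E 1) with hA
  set Y := rescale ω (mp (E 1)) with hY
  set Z := rescale (ω^2) (mp (E 1)) with hZ
  have f1 : C 3 * mp (U (V ((E 1)^9))) = A^9 + Y^9 + Z^9 := by
    rw [three_D0 ((E 1)^9), map_pow mp (E 1) 9, map_pow (rescale ω) (mp (E 1)) 9,
      map_pow (rescale (ω^2)) (mp (E 1)) 9]
  have f2 : A^3 + C ω * Y^3 + C (ω^2) * Z^3 = 0 := by
    have hz := hzero
    rw [map_pow mp (E 1) 3, map_pow (rescale ω) (mp (E 1)) 3,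
      map_pow (rescale (ω^2)) (mp (E 1)) 3] at hz
    exact hz
  have f3 : A^9 + Y^9 + Z^9 = 3 * (A^3 * Y^3 * Z^3) := by
    have hX : A^3 = -(C ω)*Y^3 - (C ω)^2*Z^3 := by
      have h2 : C (ω^2) = (C ω)^2 := by rw [map_pow]
      rw [h2] at f2
      linear_combination f2
    calc A^9 + Y^9 + Z^9 = (A^3)^3 + (Y^3)^3 + (Z^3)^3 := by ring
      _ = 3 * (A^3 * Y^3 * Z^3) := by
          rw [hX]
          linear_combination (-((Y^3)^3 + (1+(C ω)^3)*(Z^3)^3 + 3*(C ω)*(Y^3)^2*(Z^3)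
            + 3*(C ω)^2*(Y^3)*(Z^3)^2)) * hω3C
  have f4 : A * Y * Z * mp E9 = mp (E 3)^4 := dagger
  calc C 3 * (mp (U (V ((E 1)^9))) * (mp E9)^3)
      = (C 3 * mp (U (V ((E 1)^9)))) * (mp E9)^3 := by ring
    _ = (A^9 + Y^9 + Z^9) * (mp E9)^3 := by rw [f1]
    _ = 3 * (A^3*Y^3*Z^3) * (mp E9)^3 := by rw [f3]
    _ = 3 * (A*Y*Z*mp E9)^3 := by ring
    _ = 3 * (mp (E 3)^4)^3 := by rw [f4]
    _ = C 3 * (mp (E 3))^12 := by rw [hC3]; ring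

lemma star : V ((E 1)^9) * (E 3)^3 = (E 1)^12 := by
  apply U_inj
  rw [map_mul, map_pow, map_pow]
  rw [show U (E 3) = E9 from rfl]
  rw [show U (E 1) = E 3 from (U_E1).symm]
  exact starU

end EMT

/-- If `(q;q)_∞^9 / (q^3;q^3)_∞^9 = ∑_{n≥0} a_n q^n`, then
`∑_{n≥0} a_{3n} q^n = (q;q)_∞^3 / (q^3;q^3)_∞^3`. -/
theorem extract_multiples_of_three
    (a : ℕ → ℤ) (ha : PowerSeries.mk a * (E 3) ^ 9 = (E 1) ^ 9) :
    PowerSeries.mk (fun n => a (3 * n)) * (E 3) ^ 3 = (E 1) ^ 3 := by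
  have hVa := congrArg EMT.V ha
  rw [show (E 3)^9 = EMT.U ((E 1)^9) by rw [EMT.U_E1, map_pow], EMT.V_mul_U] at hVa
  have hmk : PowerSeries.mk (fun n => a (3 * n)) = EMT.V (PowerSeries.mk a) := by
    ext n
    rw [PowerSeries.coeff_mk, EMT.coeff_V, PowerSeries.coeff_mk]
  rw [hmk]
  have hE9ne : (E 1)^9 ≠ 0 := pow_ne_zero _ EMT.E1_ne
  refine mul_right_cancel₀ hE9ne ?_
  calc EMT.V (PowerSeries.mk a) * (E 3)^3 * (E 1)^9
      = (EMT.V (PowerSeries.mk a) * (E 1)^9) * (E 3)^3 := by ring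
    _ = EMT.V ((E 1)^9) * (E 3)^3 := by rw [hVa]
    _ = (E 1)^12 := EMT.star
    _ = (E 1)^3 * (E 1)^9 := by ring
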